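/- arXiv:2303.07444 — 2 statements merged into one kernel-verified Lean document; each statement's English description precedes it below -/
import Mathlib

section
/- If a graph G has layered tree-independence number at most ℓ, then for every r ∈ ℕ and every vertex v of G, the subgraph of G induced by the r-closed neighborhood N^r[v] has tree-independence number at most ℓ·(2r + 1). -/
open Classical

/-- A tree decomposition of a graph `G`. -/
structure TreeDecomp {V : Type*} (G : SimpleGraph V) where
  ι : Type
  fin : Fintype ι
  T : SimpleGraph ι
  isTree : T.IsTree
  bag : ι → Set V
  mem_bag : ∀ v : V, ∃ t, v ∈ bag t
  edge_bag : ∀ ⦃u v : V⦄, G.Adj u v → ∃ t, u ∈ bag t ∧ v ∈ bag t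
  bag_connected : ∀ v : V, (T.induce {t | v ∈ bag t}).Connected

/-- `I` is an independent set of `G` contained in `S`, i.e. an independent set of `G[S]`. -/
def IsIndepSetIn {V : Type*} (G : SimpleGraph V) (S : Set V) (I : Finset V) : Prop :=
  ↑I ⊆ S ∧ ∀ u ∈ I, ∀ v ∈ I, u ≠ v → ¬ G.Adj u v

/-- `α(G[S]) ≤ k`. -/
def IndepLE {V : Type*} (G : SimpleGraph V) (S : Set V) (k : ℕ) : Prop :=
  ∀ I : Finset V, IsIndepSetIn G S I → I.card ≤ k

/-- The independence number of the tree decomposition is at most `k`. -/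
def TreeDecomp.IndepNumLE {V : Type*} {G : SimpleGraph V} (td : TreeDecomp G) (k : ℕ) : Prop :=
  ∀ t : td.ι, IndepLE G (td.bag t) k

/-- The tree-independence number of `G` is at most `k`. -/
def treeAlphaLE {V : Type*} (G : SimpleGraph V) (k : ℕ) : Prop :=
  ∃ td : TreeDecomp G, td.IndepNumLE k

/-- The tree-independence number of `G`. -/
noncomputable def treeAlpha {V : Type*} (G : SimpleGraph V) : ℕ :=
  sInf {k | treeAlphaLE G k}

/-- A layering of `G`, encoded by the function sending a vertex to the index of its layer. -/
def IsLayering {V : Type*} (G : SimpleGraph V) (L : V → ℕ) : Prop :=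
  ∀ ⦃u v : V⦄, G.Adj u v → (L u : ℤ) ≤ (L v : ℤ) + 1

/-- The layered tree-independence number of `G` is at most `k`. -/
def layeredTreeAlphaLE {V : Type*} (G : SimpleGraph V) (k : ℕ) : Prop :=
  ∃ (td : TreeDecomp G) (L : V → ℕ), IsLayering G L ∧
    ∀ (t : td.ι) (i : ℕ), IndepLE G (td.bag t ∩ {v | L v = i}) k

/-- The layered tree-independence number of `G`. -/
noncomputable def layeredTreeAlpha {V : Type*} (G : SimpleGraph V) : ℕ :=
  sInf {k | layeredTreeAlphaLE G k}

/-- The number of elements of the multiset `𝒞` containing `v` (with multiplicity). -/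
noncomputable def coverCount {V : Type*} (𝒞 : Multiset (Set V)) (v : V) : ℕ :=
  Multiset.countP (fun C => v ∈ C) 𝒞

/-- `𝒞` is a `β`-general cover: every vertex belongs to at least `β·|𝒞|` elements. -/
def IsGeneralCover {V : Type*} (β : ℝ) (𝒞 : Multiset (Set V)) : Prop :=
  𝒞 ≠ 0 ∧ ∀ v : V, β * (Multiset.card 𝒞 : ℝ) ≤ (coverCount 𝒞 v : ℝ)

/-- The intersection graph of an (indexed) family of sets. -/
def intersectionGraph {ι : Type*} {α : Type*} (D : ι → Set α) : SimpleGraph ι where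
  Adj i j := i ≠ j ∧ (D i ∩ D j).Nonempty
  symm := by
    constructor
    rintro i j ⟨hne, x, hx1, hx2⟩
    exact ⟨hne.symm, x, hx2, hx1⟩
  loopless := by
    constructor
    rintro i ⟨hne, -⟩
    exact hne rfl

/-- The `p`-th power of a graph. -/
def gpower {V : Type*} (G : SimpleGraph V) (p : ℕ) : SimpleGraph V where
  Adj u v := u ≠ v ∧ ∃ w : G.Walk u v, w.length ≤ p
  symm := by
    constructor
    rintro u v ⟨hne, w, hw⟩
    exact ⟨hne.symm, w.reverse, by simpa using hw⟩
  loopless := by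
    constructor
    rintro u ⟨hne, -⟩
    exact hne rfl

/-- The axis-aligned closed hypercube of side length `r` with lower corner `x`. -/
def cube (d : ℕ) (x : EuclideanSpace ℝ (Fin d)) (r : ℝ) : Set (EuclideanSpace ℝ (Fin d)) :=
  {y | ∀ i, x i ≤ y i ∧ y i ≤ x i + r}

/-- The size of an object: the side length of its smallest enclosing axis-aligned hypercube. -/
noncomputable def objSize (d : ℕ) (O : Set (EuclideanSpace ℝ (Fin d))) : ℝ :=
  sInf {r : ℝ | 0 ≤ r ∧ ∃ x, O ⊆ cube d x r}

/-- The collection `O` is `c`-fat. -/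
def IsFat {ι : Type*} (d : ℕ) (c : ℝ) (O : ι → Set (EuclideanSpace ℝ (Fin d))) : Prop :=
  ∀ r : ℝ, 0 < r → ∀ x : EuclideanSpace ℝ (Fin d), ∀ P : Finset ι,
    (∀ i ∈ P, ∀ j ∈ P, i ≠ j → Disjoint (O i) (O j)) →
    (∀ i ∈ P, (O i ∩ cube d x r).Nonempty ∧ r ≤ objSize d (O i)) →
    ∃ pts : Finset (EuclideanSpace ℝ (Fin d)),
      (pts.card : ℝ) ≤ c ∧ ∀ i ∈ P, ∃ p ∈ pts, p ∈ O i

/-- The `n`-dimensional grid graph of width `n`. -/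
def gridGraphN (n : ℕ) : SimpleGraph (Fin n → Fin n) where
  Adj a b := ∑ i, ((a i : ℤ) - (b i : ℤ)).natAbs = 1
  symm := by
    constructor
    intro a b h
    rw [← h]
    exact Finset.sum_congr rfl fun i _ => by omega
  loopless := by
    constructor
    intro a h
    simp at h

/-- The grid graph on `ℤ²`. -/
def latticeGraph : SimpleGraph (ℤ × ℤ) where
  Adj p q := (p.1 - q.1).natAbs + (p.2 - q.2).natAbs = 1
  symm := by
    constructor
    intro p q h
    omega
  loopless := by
    constructor
    intro p h
    simp at h

/-- `P` is (the vertex set of) a path on the integer grid: a finite nonempty subset of `ℤ²`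
whose induced subgraph in the grid graph is a path. -/
def IsGridPath (P : Set (ℤ × ℤ)) : Prop :=
  P.Finite ∧ P.Nonempty ∧ (latticeGraph.induce P).IsTree ∧
    ∀ v : P, ((latticeGraph.induce P).neighborSet v).ncard ≤ 2


/-! A layering changes by at most one along each edge, so `N^r[v]` meets only the `2r + 1` layers
`L v - r, …, L v + r`. Restricting a layered tree decomposition to `N^r[v]` gives a tree
decomposition of `G[N^r[v]]`, and an independent set in one of its bags splits into at most
`2r + 1` independent sets, each inside a single layer of a bag of the original decomposition,
hence of size at most `ℓ`. -/

section IndepLE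

variable {V : Type*} {G : SimpleGraph V}

theorem IndepLE.mono {S S' : Set V} {k k' : ℕ} (h : IndepLE G S' k) (hS : S ⊆ S')
    (hk : k ≤ k') : IndepLE G S k' :=
  fun I hI => (h I ⟨hI.1.trans hS, hI.2⟩).trans hk

theorem IndepLE.of_forall_layer {S : Set V} {L : V → ℕ} {s : Finset ℕ} {k : ℕ}
    (hS : ∀ u ∈ S, L u ∈ s) (h : ∀ i ∈ s, IndepLE G (S ∩ {u | L u = i}) k) :
    IndepLE G S (s.card * k) := by
  rintro I ⟨hsub, hind⟩
  calc I.card = ∑ i ∈ s, (I.filter fun u => L u = i).card :=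
        Finset.card_eq_sum_card_fiberwise fun u hu => hS u (hsub hu)
    _ ≤ ∑ _i ∈ s, k := Finset.sum_le_sum fun i hi => h i hi _
        ⟨fun u hu => ⟨hsub (Finset.mem_filter.1 hu).1, (Finset.mem_filter.1 hu).2⟩,
          fun u hu w hw => hind u (Finset.mem_filter.1 hu).1 w (Finset.mem_filter.1 hw).1⟩
    _ = s.card * k := by rw [Finset.sum_const, smul_eq_mul]

theorem IndepLE.induce {S B : Set V} {k : ℕ} (h : IndepLE G (B ∩ S) k) :
    IndepLE (G.induce S) (Subtype.val ⁻¹' B) k := by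
  rintro I ⟨hsub, hind⟩
  rw [← Finset.card_map (Function.Embedding.subtype S)]
  refine h _ ⟨?_, ?_⟩
  · intro x hx
    obtain ⟨u, hu, rfl⟩ := Finset.mem_map.1 hx
    exact ⟨hsub hu, u.2⟩
  · simp only [Finset.mem_map]
    rintro _ ⟨u, hu, rfl⟩ _ ⟨w, hw, rfl⟩ hne hadj
    exact hind u hu w hw (ne_of_apply_ne _ hne) hadj

end IndepLE

def TreeDecomp.induce {V : Type*} {G : SimpleGraph V} (td : TreeDecomp G) (S : Set V) :
    TreeDecomp (G.induce S) where
  ι := td.ι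
  fin := td.fin
  T := td.T
  isTree := td.isTree
  bag t := Subtype.val ⁻¹' td.bag t
  mem_bag u := td.mem_bag u
  edge_bag _ _ h := td.edge_bag h
  bag_connected u := td.bag_connected u

theorem treeAlpha_le_of_treeAlphaLE {V : Type*} {G : SimpleGraph V} {k : ℕ}
    (h : treeAlphaLE G k) : treeAlpha G ≤ k :=
  Nat.sInf_le h

section Layering

variable {V : Type*} {G : SimpleGraph V} {L : V → ℕ}

theorem IsLayering.le_add_length (hL : IsLayering G L) {u w : V} (p : G.Walk u w) :
    (L u : ℤ) ≤ L w + p.length := by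
  induction p with
  | nil => simp
  | cons h p ih =>
    have := hL h
    rw [SimpleGraph.Walk.length_cons]
    omega

theorem IsLayering.mem_Icc_of_dist_le (hL : IsLayering G L) {v u : V} {r : ℕ}
    (hu : G.Reachable v u) (hr : G.dist v u ≤ r) : L u ∈ Finset.Icc (L v - r) (L v + r) := by
  obtain ⟨p, hp⟩ := hu.exists_walk_length_eq_dist
  have h₁ := hL.le_add_length p
  have h₂ := hL.le_add_length p.reverse
  rw [SimpleGraph.Walk.length_reverse] at h₂
  rw [Finset.mem_Icc]
  omega

end Layering

/-- The whole vertex set as a single bag, in a single layer. -/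
theorem layeredTreeAlphaLE_card {V : Type} [Fintype V] (G : SimpleGraph V) :
    layeredTreeAlphaLE G (Fintype.card V) := by
  refine ⟨⟨Unit, inferInstance, ⊥, ?_, fun _ => Set.univ, fun _ => ⟨(), trivial⟩,
    fun _ _ _ => ⟨(), trivial, trivial⟩, fun v => ?_⟩, fun _ => 0, fun _ _ _ => by simp,
    fun _ _ I _ => Finset.card_le_univ I⟩
  · exact .of_subsingleton
  · have : Nonempty {t : Unit | v ∈ (Set.univ : Set V)} := ⟨⟨(), trivial⟩⟩
    exact .of_subsingleton

theorem layeredTreeAlphaLE_of_layeredTreeAlpha_le {V : Type} [Fintype V] {G : SimpleGraph V}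
    {l : ℕ} (h : layeredTreeAlpha G ≤ l) : layeredTreeAlphaLE G l := by
  obtain ⟨td, L, hL, hbag⟩ :=
    Nat.sInf_mem (s := {k | layeredTreeAlphaLE G k}) ⟨_, layeredTreeAlphaLE_card G⟩
  exact ⟨td, L, hL, fun t i => (hbag t i).mono subset_rfl h⟩

/-- If `G` has layered tree-independence number at most `ℓ`, then for every `r`
and vertex `v`, the subgraph induced by the `r`-closed neighborhood of `v` has
tree-independence number at most `ℓ·(2r+1)`. -/
theorem stmt1 {V : Type} [Fintype V] (G : SimpleGraph V) (l : ℕ)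
    (h : layeredTreeAlpha G ≤ l) (r : ℕ) (v : V) :
    treeAlpha (G.induce {u | G.Reachable v u ∧ G.dist v u ≤ r}) ≤ l * (2 * r + 1) := by
  obtain ⟨td, L, hL, hbag⟩ := layeredTreeAlphaLE_of_layeredTreeAlpha_le h
  set S := {u | G.Reachable v u ∧ G.dist v u ≤ r}
  have hS : ∀ u ∈ S, L u ∈ Finset.Icc (L v - r) (L v + r) :=
    fun u hu => hL.mem_Icc_of_dist_le hu.1 hu.2
  have hcard : (Finset.Icc (L v - r) (L v + r)).card * l ≤ l * (2 * r + 1) := by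
    rw [Nat.card_Icc, Nat.mul_comm]
    exact Nat.mul_le_mul_left _ (by omega)
  refine treeAlpha_le_of_treeAlphaLE ⟨td.induce S, fun t => IndepLE.induce ?_⟩
  have hlayer : ∀ i, IndepLE G (td.bag t ∩ S ∩ {u | L u = i}) l := fun i =>
    (hbag t i).mono (Set.inter_subset_inter_left _ Set.inter_subset_left) le_rfl
  exact (IndepLE.of_forall_layer (fun u hu => hS u hu.2) fun i _ => hlayer i).mono subset_rfl hcard
end

section
/- Let r > 2 be an integer and m ∈ ℕ, and let n be an integer with n > m/(1 − 2/r). Then every (1 − 1/r)-general cover 𝒞 of the complete bipartite graph K_{n,n} contains an element C such that the subgraph of K_{n,n} induced by C contains K_{m,m} as an induced subgraph; in particular, tree-α(K_{n,n}[C]) ≥ m, so no (1 − 1/r)-general cover of K_{n,n} has tree-independence number less than m. -/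
open Classical

/-!
Averaging the cover condition over the `2n` vertices of `K_{n,n}` gives a member `C` of the cover
with at least `(1 - 1/r) · 2n = n + n (1 - 2/r) > n + m` vertices, hence at least `m` vertices on
each side; these induce a copy of `K_{m,m}`.

For the bound on tree-independence, fix a tree decomposition. The bags containing a given vertex
form a subtree, and the subtree of every left vertex of `K_{m,m}` meets the subtree of every right
vertex. A Helly-type property of trees, proved by deleting leaves one at a time, then gives a bag
that contains a whole side of `K_{m,m}`, which is an independent set of size `m`.
-/

namespace SimpleGraph

variable {V : Type*} {T : SimpleGraph V}

theorem Connected.induce_diff_singleton {S : Set V} {ℓ : V} (hS : (T.induce S).Connected)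
    (hℓ : (T.neighborSet ℓ ∩ S).Subsingleton) (hne : (S \ {ℓ}).Nonempty) :
    (T.induce (S \ {ℓ})).Connected := by
  refine (connected_iff _).mpr ⟨?_, hne.to_subtype⟩
  rintro ⟨x, hxS, hxℓ⟩ ⟨y, hyS, hyℓ⟩
  obtain ⟨p, hp⟩ := hS.exists_isPath ⟨x, hxS⟩ ⟨y, hyS⟩
  have hp_avoid : ∀ z ∈ p.support, (z : V) ≠ ℓ := by
    rintro ⟨z, hzS⟩ hz rfl
    refine hp.isTrail.not_mem_support_of_subsingleton_neighborSet ?_ ?_ ?_ hz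
    · exact fun h => hxℓ (congrArg Subtype.val h).symm
    · exact fun h => hyℓ (congrArg Subtype.val h).symm
    · rintro ⟨u, huS⟩ hu ⟨w, hwS⟩ hw
      exact Subtype.ext (hℓ ⟨hu, huS⟩ ⟨hw, hwS⟩)
  let q := p.map (Embedding.induce S).toHom
  refine ⟨q.induce (S \ {ℓ}) fun z hz => ?_⟩
  rw [Walk.support_map, List.mem_map] at hz
  obtain ⟨z, hz, rfl⟩ := hz
  exact ⟨z.2, hp_avoid z hz⟩

theorem Connected.exists_adj_of_ne {S : Set V} (hS : (T.induce S).Connected) {x y : V}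
    (hx : x ∈ S) (hy : y ∈ S) (hxy : x ≠ y) : ∃ u ∈ S, T.Adj x u := by
  obtain ⟨p⟩ := hS.preconnected ⟨x, hx⟩ ⟨y, hy⟩
  have hnil : ¬p.Nil := Walk.not_nil_of_ne fun h => hxy (congrArg Subtype.val h)
  exact ⟨p.snd, p.snd.2, p.adj_snd hnil⟩

theorem Connected.inter_diff_singleton_nonempty {S R : Set V} {ℓ : V}
    (hS : (T.induce S).Connected) (hR : (T.induce R).Connected)
    (hℓ : (T.neighborSet ℓ ∩ (S ∪ R)).Subsingleton) (hSR : (S ∩ R).Nonempty)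
    (hS' : (S \ {ℓ}).Nonempty) (hR' : (R \ {ℓ}).Nonempty) :
    ((S \ {ℓ}) ∩ (R \ {ℓ})).Nonempty := by
  obtain ⟨x, hxS, hxR⟩ := hSR
  by_cases hx : x = ℓ
  · subst hx
    obtain ⟨y, hyS, hyx⟩ := hS'
    obtain ⟨z, hzR, hzx⟩ := hR'
    obtain ⟨u, huS, hu⟩ := hS.exists_adj_of_ne hxS hyS (Ne.symm hyx)
    obtain ⟨w, hwR, hw⟩ := hR.exists_adj_of_ne hxR hzR (Ne.symm hzx)
    obtain rfl : u = w := hℓ ⟨hu, Or.inl huS⟩ ⟨hw, Or.inr hwR⟩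
    exact ⟨u, ⟨huS, hu.ne'⟩, ⟨hwR, hu.ne'⟩⟩
  · exact ⟨x, ⟨hxS, hx⟩, ⟨hxR, hx⟩⟩

theorem IsAcyclic.exists_forall_mem_or_forall_mem_of_subset (hT : T.IsAcyclic)
    {A B : Type*} (U : Finset V) (hU : (T.induce U).Connected) {S : A → Set V} {R : B → Set V}
    (hSU : ∀ a, S a ⊆ U) (hRU : ∀ b, R b ⊆ U)
    (hS : ∀ a, (T.induce (S a)).Connected) (hR : ∀ b, (T.induce (R b)).Connected)
    (hSR : ∀ a b, (S a ∩ R b).Nonempty) :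
    ∃ t, (∀ a, t ∈ S a) ∨ (∀ b, t ∈ R b) := by
  classical
  -- Inducting on `U` rather than on `V` keeps all subtrees inside the same ambient graph `T`.
  induction U using Finset.strongInduction generalizing S R with | H U ih =>
  obtain ⟨⟨t, htU⟩⟩ := hU.nonempty
  rcases subsingleton_or_nontrivial U with hU1 | hU2
  · refine ⟨t, Or.inl fun a => ?_⟩
    obtain ⟨⟨x, hx⟩⟩ := (hS a).nonempty
    obtain rfl : x = t := congrArg Subtype.val (Subsingleton.elim (⟨x, hSU a hx⟩ : U) ⟨t, htU⟩)
    exact hx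
  obtain ⟨⟨ℓ, hℓU⟩, hℓ⟩ := IsTree.exists_vert_degree_one_of_nontrivial ⟨hU, hT.induce _⟩
  obtain ⟨⟨s, hsU⟩, hs, hs_unique⟩ := degree_eq_one_iff_existsUnique_adj.mp hℓ
  have hleaf : (T.neighborSet ℓ ∩ U).Subsingleton := fun u hu w hw =>
    congrArg Subtype.val ((hs_unique ⟨u, hu.2⟩ hu.1).trans (hs_unique ⟨w, hw.2⟩ hw.1).symm)
  by_cases hA : ∃ a, S a ⊆ {ℓ}
  · obtain ⟨a, ha⟩ := hA
    refine ⟨ℓ, Or.inr fun b => ?_⟩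
    obtain ⟨x, hxS, hxR⟩ := hSR a b
    rwa [← ha hxS]
  by_cases hB : ∃ b, R b ⊆ {ℓ}
  · obtain ⟨b, hb⟩ := hB
    refine ⟨ℓ, Or.inl fun a => ?_⟩
    obtain ⟨x, hxS, hxR⟩ := hSR a b
    rwa [← hb hxR]
  push Not at hA hB
  have hS' : ∀ a, (S a \ {ℓ}).Nonempty := fun a => Set.sdiff_nonempty.mpr (hA a)
  have hR' : ∀ b, (R b \ {ℓ}).Nonempty := fun b => Set.sdiff_nonempty.mpr (hB b)
  have hU' : (T.induce ↑(U.erase ℓ)).Connected := by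
    rw [Finset.coe_erase]
    exact hU.induce_diff_singleton hleaf ⟨s, hsU, (show T.Adj ℓ s from hs).ne'⟩
  have hSR' : ∀ a b, ((S a \ {ℓ}) ∩ (R b \ {ℓ})).Nonempty := fun a b =>
    (hS a).inter_diff_singleton_nonempty (hR b)
      (hleaf.anti (by gcongr; exact Set.union_subset (hSU a) (hRU b))) (hSR a b) (hS' a) (hR' b)
  obtain ⟨t, ht⟩ := ih (U.erase ℓ) (Finset.erase_ssubset hℓU) hU'
    (fun a => by rw [Finset.coe_erase]; exact Set.sdiff_subset_sdiff_left (hSU a))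
    (fun b => by rw [Finset.coe_erase]; exact Set.sdiff_subset_sdiff_left (hRU b))
    (fun a => (hS a).induce_diff_singleton (hleaf.anti (by gcongr; exact hSU a)) (hS' a))
    (fun b => (hR b).induce_diff_singleton (hleaf.anti (by gcongr; exact hRU b)) (hR' b))
    hSR'
  exact ⟨t, ht.imp (fun h a => (h a).1) (fun h b => (h b).1)⟩

theorem IsTree.exists_forall_mem_or_forall_mem [Finite V] (hT : T.IsTree) {A B : Type*}
    {S : A → Set V} {R : B → Set V}
    (hS : ∀ a, (T.induce (S a)).Connected) (hR : ∀ b, (T.induce (R b)).Connected)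
    (hSR : ∀ a b, (S a ∩ R b).Nonempty) :
    ∃ t, (∀ a, t ∈ S a) ∨ (∀ b, t ∈ R b) := by
  have := Fintype.ofFinite V
  refine hT.isAcyclic.exists_forall_mem_or_forall_mem_of_subset Finset.univ ?_
    (fun a => by simp) (fun b => by simp) hS hR hSR
  rw [Finset.coe_univ]
  exact (induceUnivIso T).connected_iff.mpr hT.connected

end SimpleGraph

theorem treeAlphaLE_card {V : Type*} [Fintype V] (G : SimpleGraph V) :
    treeAlphaLE G (Fintype.card V) := by
  refine ⟨⟨Unit, inferInstance, ⊥, .of_subsingleton, fun _ => Set.univ, fun _ => ⟨(), trivial⟩,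
    fun _ _ _ => ⟨(), trivial, trivial⟩, fun _ => ?_⟩, fun _ I _ => Finset.card_le_univ I⟩
  exact (SimpleGraph.connected_iff _).mpr ⟨fun _ _ => .of_subsingleton, ⟨⟨(), trivial⟩⟩⟩

theorem isIndepSetIn_map {V W : Type*} {G : SimpleGraph V} {H : SimpleGraph W} (φ : H ↪g G)
    {S : Set V} {s : Finset W} (hs : ∀ u ∈ s, ∀ v ∈ s, ¬ H.Adj u v) (hsS : ∀ u ∈ s, φ u ∈ S) :
    IsIndepSetIn G S (s.map φ.toEmbedding) := by
  refine ⟨fun x hx => ?_, fun x hx y hy _ => ?_⟩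
  · obtain ⟨u, hu, rfl⟩ := Finset.mem_map.mp hx
    exact hsS u hu
  · obtain ⟨u, hu, rfl⟩ := Finset.mem_map.mp hx
    obtain ⟨v, hv, rfl⟩ := Finset.mem_map.mp hy
    exact φ.map_adj_iff.not.mpr (hs u hu v hv)

theorem TreeDecomp.min_card_le_of_embedding {V α β : Type*} [Fintype α] [Fintype β]
    {G : SimpleGraph V} (td : TreeDecomp G) {k : ℕ} (hk : td.IndepNumLE k)
    (φ : completeBipartiteGraph α β ↪g G) : min (Fintype.card α) (Fintype.card β) ≤ k := by
  have := td.fin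
  obtain ⟨t, ht⟩ := td.isTree.exists_forall_mem_or_forall_mem
    (S := fun a => {t | φ (.inl a) ∈ td.bag t}) (R := fun b => {t | φ (.inr b) ∈ td.bag t})
    (fun a => td.bag_connected _) (fun b => td.bag_connected _)
    (fun a b => td.edge_bag (φ.map_adj_iff.mpr (by simp)))
  rcases ht with h | h
  · calc min (Fintype.card α) (Fintype.card β) ≤ Fintype.card α := min_le_left _ _
      _ ≤ k := by
        simpa using
          hk t _ (isIndepSetIn_map φ (s := Finset.univ.map .inl) (by simp) (by simpa using h))
  · calc min (Fintype.card α) (Fintype.card β) ≤ Fintype.card β := min_le_right _ _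
      _ ≤ k := by
        simpa using
          hk t _ (isIndepSetIn_map φ (s := Finset.univ.map .inr) (by simp) (by simpa using h))

theorem min_card_le_treeAlpha_of_embedding {V α β : Type*} [Finite V] [Fintype α] [Fintype β]
    {G : SimpleGraph V} (φ : completeBipartiteGraph α β ↪g G) :
    min (Fintype.card α) (Fintype.card β) ≤ treeAlpha G := by
  have := Fintype.ofFinite V
  -- `treeAlpha` is an `sInf`, which is `0` on the empty set: exhibit a decomposition first.
  exact le_csInf ⟨_, treeAlphaLE_card G⟩ fun k ⟨td, hk⟩ => td.min_card_le_of_embedding hk φ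

theorem sum_coverCount {V : Type*} [Fintype V] (𝒞 : Multiset (Set V)) :
    ∑ v, coverCount 𝒞 v = (𝒞.map fun C : Set V => Nat.card C).sum := by
  classical
  induction 𝒞 using Multiset.induction_on with
  | empty => simp [coverCount]
  | cons C 𝒞 ih =>
    simp only [coverCount, Multiset.countP_cons, Finset.sum_add_distrib, Multiset.map_cons,
      Multiset.sum_cons, Nat.card_eq_fintype_card, Fintype.card_subtype, Finset.sum_boole,
      Nat.cast_id] at ih ⊢
    rw [ih, add_comm]

theorem IsGeneralCover.exists_mem_mul_card_le {V : Type*} [Fintype V] {β : ℝ}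
    {𝒞 : Multiset (Set V)} (h𝒞 : IsGeneralCover β 𝒞) :
    ∃ C ∈ 𝒞, β * Fintype.card V ≤ Nat.card C := by
  obtain ⟨hne, hcount⟩ := h𝒞
  obtain ⟨C, hC, hmax⟩ := 𝒞.toFinset.exists_max_image (fun C : Set V => Nat.card C)
    (Multiset.toFinset_nonempty.mpr hne)
  refine ⟨C, Multiset.mem_toFinset.mp hC, ?_⟩
  have hsum : ∑ v, coverCount 𝒞 v ≤ Multiset.card 𝒞 * Nat.card C := by
    rw [sum_coverCount, ← Multiset.card_map (fun C : Set V => Nat.card C), ← smul_eq_mul]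
    exact Multiset.sum_le_card_nsmul _ _ (by simpa using fun D hD => hmax D hD)
  have hcard : (0 : ℝ) < Multiset.card 𝒞 := by exact_mod_cast Multiset.card_pos.mpr hne
  refine le_of_mul_le_mul_left ?_ hcard
  calc (Multiset.card 𝒞 : ℝ) * (β * Fintype.card V)
        = Fintype.card V * (β * Multiset.card 𝒞) := by ring
    _ ≤ ∑ v, (coverCount 𝒞 v : ℝ) := by
        simpa using Finset.card_nsmul_le_sum Finset.univ _ _ fun v _ => hcount v
    _ ≤ Multiset.card 𝒞 * Nat.card C := by exact_mod_cast hsum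

def completeBipartiteGraphEmbeddingInduce {α β γ δ : Type*} {C : Set (α ⊕ β)}
    (f : γ ↪ Sum.inl ⁻¹' C) (g : δ ↪ Sum.inr ⁻¹' C) :
    completeBipartiteGraph γ δ ↪g (completeBipartiteGraph α β).induce C where
  toFun := Sum.elim (fun c => ⟨.inl (f c), (f c).2⟩) (fun d => ⟨.inr (g d), (g d).2⟩)
  inj' := by
    rintro (c | d) (c' | d') h <;>
      simp only [Sum.elim_inl, Sum.elim_inr, Subtype.mk.injEq, Sum.inl.injEq, Sum.inr.injEq,
        reduceCtorEq] at h
    · exact congrArg _ (f.injective (Subtype.ext h))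
    · exact congrArg _ (g.injective (Subtype.ext h))
  map_rel_iff' := by
    rintro (c | d) (c' | d') <;> exact Iff.rfl

theorem natCard_eq_preimage_inl_add_preimage_inr {α β : Type*} [Finite α] [Finite β]
    (C : Set (α ⊕ β)) :
    Nat.card C = Nat.card (Sum.inl ⁻¹' C) + Nat.card (Sum.inr ⁻¹' C) := by
  rw [Nat.card_congr Equiv.subtypeSum, Nat.card_sum]
  rfl

theorem nonempty_embedding_induce_of_add_le_natCard {α β : Type*} [Finite α] [Finite β]
    {C : Set (α ⊕ β)} {m : ℕ} (hα : Nat.card α + m ≤ Nat.card C)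
    (hβ : Nat.card β + m ≤ Nat.card C) :
    Nonempty (completeBipartiteGraph (Fin m) (Fin m) ↪g (completeBipartiteGraph α β).induce C) := by
  have hsplit := natCard_eq_preimage_inl_add_preimage_inr C
  have hl : Nat.card (Sum.inl ⁻¹' C) ≤ Nat.card α := Finite.card_subtype_le _
  have hr : Nat.card (Sum.inr ⁻¹' C) ≤ Nat.card β := Finite.card_subtype_le _
  have := Fintype.ofFinite (Sum.inl ⁻¹' C)
  have := Fintype.ofFinite (Sum.inr ⁻¹' C)
  obtain ⟨f⟩ := Function.Embedding.nonempty_of_card_le (α := Fin m) (β := Sum.inl ⁻¹' C)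
    (by rw [Fintype.card_fin, ← Nat.card_eq_fintype_card]; omega)
  obtain ⟨g⟩ := Function.Embedding.nonempty_of_card_le (α := Fin m) (β := Sum.inr ⁻¹' C)
    (by rw [Fintype.card_fin, ← Nat.card_eq_fintype_card]; omega)
  exact ⟨completeBipartiteGraphEmbeddingInduce f g⟩

/-- For `r > 2` and `n > m/(1 - 2/r)`, every `(1 - 1/r)`-general cover of
`K_{n,n}` has an element whose induced subgraph contains `K_{m,m}` as an induced subgraph, and
hence has tree-independence number at least `m`. -/
theorem stmt7 (r : ℕ) (hr : 2 < r) (m n : ℕ)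
    (hn : (m : ℝ) / (1 - 2 / (r : ℝ)) < (n : ℝ))
    (𝒞 : Multiset (Set (Fin n ⊕ Fin n)))
    (h𝒞 : IsGeneralCover (1 - 1 / (r : ℝ)) 𝒞) :
    ∃ C ∈ 𝒞,
      Nonempty ((completeBipartiteGraph (Fin m) (Fin m)) ↪g
          ((completeBipartiteGraph (Fin n) (Fin n)).induce C)) ∧
      m ≤ treeAlpha ((completeBipartiteGraph (Fin n) (Fin n)).induce C) := by
  have hr' : (2 : ℝ) < r := by exact_mod_cast hr
  have hm : (m : ℝ) < n * (1 - 2 / r) :=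
    (div_lt_iff₀ (by rw [sub_pos, div_lt_one (by linarith)]; exact hr')).mp hn
  obtain ⟨C, hC, hcard⟩ := h𝒞.exists_mem_mul_card_le
  have hbig : Nat.card (Fin n) + m ≤ Nat.card C := by
    rw [Nat.card_fin]
    have hmean : (1 - 1 / r) * (n + n : ℝ) = n + n * (1 - 2 / r) := by ring
    rw [Fintype.card_sum, Fintype.card_fin, Nat.cast_add, hmean] at hcard
    exact_mod_cast (show ((n + m : ℕ) : ℝ) ≤ Nat.card C by push_cast; linarith)
  obtain ⟨φ⟩ := nonempty_embedding_induce_of_add_le_natCard hbig hbig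
  exact ⟨C, hC, ⟨φ⟩, by simpa using min_card_le_treeAlpha_of_embedding φ⟩
end
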